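/- Let y ∈ ℝⁿ with y ≠ 0, X an n×d real matrix, and β ∈ ℝᵈ. Then the infimum, over all pairs (D, v) with D a d×d positive semidefinite real matrix and v ≥ 0 a real number such that y − Xβ ∈ range(v I_n) and β ∈ range(D), of (y − Xβ)ᵀ (v I)† (y − Xβ) + βᵀ D† β + tr(X D Xᵀ + v I)/‖y‖₂² equals (2n/‖y‖₂) · ( √(MSPE(β)) + (1/√n) √(βᵀ Ĉ β) ), where MSPE(β) = ‖y − Xβ‖₂²/n and Ĉ = XᵀX/n. Consequently, minimizing this infimum over β is equivalent to minimizing √(MSPE(β)) + (1/√n) ‖β‖_{Ĉ}, i.e., the criterion with tuned Ĉ-weighted ℓ₂ regularization. -/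

import Mathlib

/-!
The objective splits into a residual part `‖r‖² / v + (n / ‖y‖²) v` in `v` and a coefficient
part `βᵀ D† β + tr(X D Xᵀ) / ‖y‖²` in `D`, so the infimum is the sum of two infima. Both are
AM–GM bounds `p / t + q t ≥ 2 √(p q)`: for the residual part directly, and for the coefficient part
because, writing `β = D z`, one has `βᵀ D† β = zᵀ D z`, so Cauchy–Schwarz for the semi-inner
product of `D`, applied to each row of `X`, gives `‖Xβ‖² ≤ (βᵀ D† β) tr(X D Xᵀ)`. The choices
`v = t` and `D = t ββᵀ` realize the values `p / t + q t`, whose infimum over `t > 0` is `2 √(p q)`.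
-/

open Matrix

/-- The four Penrose conditions: `B` is the Moore–Penrose pseudoinverse of `A`. -/
def IsMoorePenrose {m n : Type*} [Fintype m] [Fintype n]
    (A : Matrix m n ℝ) (B : Matrix n m ℝ) : Prop :=
  A * B * A = A ∧ B * A * B = B ∧ (A * B)ᵀ = A * B ∧ (B * A)ᵀ = B * A

/-- The Moore–Penrose pseudoinverse of `v I`: `v⁻¹ I` for `v ≠ 0`, and `0` for `v = 0`. -/
noncomputable def pinvScal (m : ℕ) (v : ℝ) : Matrix (Fin m) (Fin m) ℝ :=
  if v = 0 then 0 else v⁻¹ • 1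

/-- The inner infimum over pairs `(D, v)` with `D` PSD and `v ≥ 0` such that
`y − Xβ ∈ range(v I)` and `β ∈ range(D)` of
`(y − Xβ)ᵀ (vI)† (y − Xβ) + βᵀ D† β + tr(X D Xᵀ + v I)/‖y‖₂²`. -/
noncomputable def innerInf {n d : ℕ} (y : Fin n → ℝ)
    (X : Matrix (Fin n) (Fin d) ℝ) (β : Fin d → ℝ) : ℝ :=
  sInf {r : ℝ | ∃ (D Dd : Matrix (Fin d) (Fin d) ℝ) (v : ℝ),
    D.PosSemidef ∧ IsMoorePenrose D Dd ∧ 0 ≤ v ∧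
    y - X.mulVec β ∈
      Set.range (Matrix.mulVec (v • (1 : Matrix (Fin n) (Fin n) ℝ))) ∧
    β ∈ Set.range D.mulVec ∧
    r = (y - X.mulVec β) ⬝ᵥ (pinvScal n v).mulVec (y - X.mulVec β) +
      β ⬝ᵥ Dd.mulVec β +
      (X * D * Xᵀ + v • (1 : Matrix (Fin n) (Fin n) ℝ)).trace / (y ⬝ᵥ y)}

/-- The criterion `√(MSPE(β)) + (1/√n) ‖β‖_{Ĉ}` with `Ĉ = XᵀX/n`. -/
noncomputable def gCrit {n d : ℕ} (y : Fin n → ℝ)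
    (X : Matrix (Fin n) (Fin d) ℝ) (β : Fin d → ℝ) : ℝ :=
  Real.sqrt ((y - X.mulVec β) ⬝ᵥ (y - X.mulVec β) / n) +
    (1 / Real.sqrt n) *
      Real.sqrt (β ⬝ᵥ ((1 / (n : ℝ)) • (Xᵀ * X)).mulVec β)

open Filter Topology

lemma two_sqrt_le_add_of_le_mul {c x y : ℝ} (hx : 0 ≤ x) (hy : 0 ≤ y) (h : c ≤ x * y) :
    2 * √c ≤ x + y := by
  have hc : √c ≤ √x * √y := (Real.sqrt_le_sqrt h).trans_eq (Real.sqrt_mul hx y)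
  nlinarith [Real.sq_sqrt hx, Real.sq_sqrt hy, sq_nonneg (√x - √y)]

lemma isGLB_image_div_add_mul {p q : ℝ} (hp : 0 ≤ p) (hq : 0 ≤ q) :
    IsGLB ((fun t => p / t + q * t) '' Set.Ioi 0) (2 * √(p * q)) := by
  refine ⟨?_, fun b hb => ?_⟩
  · rintro _ ⟨t, ht, rfl⟩
    have ht : 0 < t := ht
    exact two_sqrt_le_add_of_le_mul (by positivity) (by positivity)
      (le_of_eq (by field_simp))
  · -- `t = (√p + δ) / (√q + δ)` is optimal as `δ → 0`; it avoids dividing by `√q = 0`.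
    have hδ : ∀ δ > 0, b ≤ 2 * √(p * q) + δ * (√p + √q) := by
      intro δ hδ
      have hs := Real.sqrt_nonneg p
      have hu := Real.sqrt_nonneg q
      refine (hb ⟨(√p + δ) / (√q + δ), Set.mem_Ioi.mpr (by positivity), rfl⟩).trans ?_
      dsimp only
      rw [Real.sqrt_mul hp]
      nth_rewrite 1 [← Real.sq_sqrt hp]
      nth_rewrite 2 [← Real.sq_sqrt hq]
      rw [div_div_eq_mul_div, ← mul_div_assoc, div_add_div _ _ (by positivity) (by positivity),
        div_le_iff₀ (by positivity)]
      nlinarith [mul_nonneg (mul_nonneg hs hδ.le) (sq_nonneg (√q + δ)),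
        mul_nonneg (mul_nonneg hu hδ.le) (sq_nonneg (√p + δ))]
    have hlim : Tendsto (fun δ : ℝ => 2 * √(p * q) + δ * (√p + √q)) (𝓝[>] 0)
        (𝓝 (2 * √(p * q))) := by
      have hcont : Continuous fun δ : ℝ => 2 * √(p * q) + δ * (√p + √q) := by fun_prop
      simpa using tendsto_nhdsWithin_of_tendsto_nhds (hcont.tendsto 0)
    exact ge_of_tendsto hlim (eventually_nhdsWithin_of_forall hδ)

theorem IsGLB.of_forall_exists_le {α : Type*} [Preorder α] {s t : Set α} {a : α}
    (ht : IsGLB t a) (hs : a ∈ lowerBounds s) (hst : ∀ x ∈ t, ∃ y ∈ s, y ≤ x) : IsGLB s a :=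
  ⟨hs, fun _ hb => ht.2 fun x hx =>
    let ⟨_, hy, hyx⟩ := hst x hx
    (hb hy).trans hyx⟩

section

variable {ι m : Type*} [Fintype ι]

lemma Matrix.PosSemidef.dotProduct_mulVec_sq_le {D : Matrix ι ι ℝ} (hD : D.PosSemidef)
    (x z : ι → ℝ) : (x ⬝ᵥ D *ᵥ z) ^ 2 ≤ (x ⬝ᵥ D *ᵥ x) * (z ⬝ᵥ D *ᵥ z) := by
  classical
  have hsymm : z ⬝ᵥ D *ᵥ x = x ⬝ᵥ D *ᵥ z := by
    rw [dotProduct_mulVec, ← mulVec_transpose, ← conjTranspose_eq_transpose_of_trivial, hD.1.eq,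
      dotProduct_comm]
  have h := LinearMap.BilinForm.apply_mul_apply_le_of_forall_zero_le (Matrix.toBilin' D)
    (fun v => by simpa only [toBilin'_apply', star_trivial] using hD.dotProduct_mulVec_nonneg v) x z
  simpa only [toBilin'_apply', hsymm, ← sq] using h

lemma Matrix.mul_mul_transpose_apply_self {α : Type*} [NonUnitalSemiring α] (X : Matrix m ι α)
    (D : Matrix ι ι α) (i : m) : (X * D * Xᵀ) i i = X i ⬝ᵥ D *ᵥ X i := by
  rw [Matrix.mul_assoc]
  rfl

lemma Matrix.trace_mul_mul_transpose [Fintype m] {α : Type*} [NonUnitalSemiring α]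
    (X : Matrix m ι α) (D : Matrix ι ι α) : (X * D * Xᵀ).trace = ∑ i, X i ⬝ᵥ D *ᵥ X i :=
  Finset.sum_congr rfl fun i _ => mul_mul_transpose_apply_self X D i

lemma Matrix.PosSemidef.dotProduct_self_mulVec_mulVec_le [Fintype m] {D : Matrix ι ι ℝ}
    (hD : D.PosSemidef) (X : Matrix m ι ℝ) (z : ι → ℝ) :
    (X *ᵥ D *ᵥ z) ⬝ᵥ (X *ᵥ D *ᵥ z) ≤ (z ⬝ᵥ D *ᵥ z) * (X * D * Xᵀ).trace := by
  calc (X *ᵥ D *ᵥ z) ⬝ᵥ (X *ᵥ D *ᵥ z) = ∑ i, (X i ⬝ᵥ D *ᵥ z) ^ 2 :=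
        Finset.sum_congr rfl fun i _ => (sq _).symm
    _ ≤ ∑ i, (z ⬝ᵥ D *ᵥ z) * (X i ⬝ᵥ D *ᵥ X i) :=
        Finset.sum_le_sum fun i _ => (hD.dotProduct_mulVec_sq_le _ _).trans_eq (mul_comm _ _)
    _ = (z ⬝ᵥ D *ᵥ z) * (X * D * Xᵀ).trace := by rw [trace_mul_mul_transpose, Finset.mul_sum]

lemma Matrix.IsHermitian.mulVec_dotProduct_mulVec_mulVec {D G : Matrix ι ι ℝ}
    (hD : D.IsHermitian) (hG : D * G * D = D) (z : ι → ℝ) :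
    (D *ᵥ z) ⬝ᵥ G *ᵥ D *ᵥ z = z ⬝ᵥ D *ᵥ z := by
  have hDz : D *ᵥ z = z ᵥ* D := by
    rw [← mulVec_transpose, ← conjTranspose_eq_transpose_of_trivial, hD.eq]
  calc (D *ᵥ z) ⬝ᵥ G *ᵥ D *ᵥ z = z ⬝ᵥ D *ᵥ G *ᵥ D *ᵥ z := by rw [dotProduct_mulVec z D, ← hDz]
    _ = z ⬝ᵥ D *ᵥ z := by rw [mulVec_mulVec, mulVec_mulVec, hG]

lemma isMoorePenrose_smul_vecMulVec_self {β : ι → ℝ} (hβ : β ≠ 0) {t : ℝ} (ht : t ≠ 0) :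
    IsMoorePenrose (t • vecMulVec β β) ((t * (β ⬝ᵥ β) ^ 2)⁻¹ • vecMulVec β β) := by
  have hb : β ⬝ᵥ β ≠ 0 := by simpa using (dotProduct_star_self_pos_iff.2 hβ).ne'
  have hmul : ∀ s s' : ℝ, (s • vecMulVec β β) * (s' • vecMulVec β β)
      = (s * s' * (β ⬝ᵥ β)) • vecMulVec β β := by
    intro s s'
    rw [smul_mul_smul_comm, vecMulVec_mul_vecMulVec, vecMulVec_smul, smul_smul]
  have htr : ∀ s : ℝ, (s • vecMulVec β β)ᵀ = s • vecMulVec β β := by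
    intro s
    rw [transpose_smul, transpose_vecMulVec]
  refine ⟨?_, ?_, ?_, ?_⟩
  · rw [hmul, hmul]
    congr 1
    field_simp
  · rw [hmul, hmul]
    congr 1
    field_simp
  · rw [hmul, htr]
  · rw [hmul, htr]

lemma isGLB_coef_penalty [Fintype m] (X : Matrix m ι ℝ) (β : ι → ℝ) {κ : ℝ} (hκ : 0 ≤ κ) :
    IsGLB {s | ∃ D Dd : Matrix ι ι ℝ, D.PosSemidef ∧ IsMoorePenrose D Dd ∧
        β ∈ Set.range D.mulVec ∧ s = β ⬝ᵥ Dd *ᵥ β + κ * (X * D * Xᵀ).trace}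
      (2 * √(κ * ((X *ᵥ β) ⬝ᵥ (X *ᵥ β)))) := by
  have hc : 0 ≤ (X *ᵥ β) ⬝ᵥ (X *ᵥ β) := by simpa using dotProduct_star_self_nonneg (X *ᵥ β)
  have h := isGLB_image_div_add_mul zero_le_one (mul_nonneg hκ hc)
  rw [one_mul] at h
  refine h.of_forall_exists_le ?_ ?_
  · rintro _ ⟨D, Dd, hD, hMP, ⟨z, rfl⟩, rfl⟩
    have htr : 0 ≤ (X * D * Xᵀ).trace := by
      simpa only [conjTranspose_eq_transpose_of_trivial] using
        (hD.mul_mul_conjTranspose_same X).trace_nonneg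
    rw [hD.1.mulVec_dotProduct_mulVec_mulVec hMP.1]
    refine two_sqrt_le_add_of_le_mul (by simpa using hD.dotProduct_mulVec_nonneg z)
      (mul_nonneg hκ htr) ?_
    calc κ * ((X *ᵥ D *ᵥ z) ⬝ᵥ (X *ᵥ D *ᵥ z))
        ≤ κ * ((z ⬝ᵥ D *ᵥ z) * (X * D * Xᵀ).trace) :=
          mul_le_mul_of_nonneg_left (hD.dotProduct_self_mulVec_mulVec_le X z) hκ
      _ = (z ⬝ᵥ D *ᵥ z) * (κ * (X * D * Xᵀ).trace) := by ring
  · rintro _ ⟨t, ht, rfl⟩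
    have ht : 0 < t := ht
    by_cases hβ : β = 0
    · refine ⟨0, ⟨0, 0, PosSemidef.zero, by simp [IsMoorePenrose], ⟨0, by simp [hβ]⟩, ?_⟩, ?_⟩
      · simp
      · positivity
    have hb : β ⬝ᵥ β ≠ 0 := by simpa using (dotProduct_star_self_pos_iff.2 hβ).ne'
    refine ⟨_, ⟨t • vecMulVec β β, _, ?_, isMoorePenrose_smul_vecMulVec_self hβ ht.ne',
      ⟨(t * (β ⬝ᵥ β))⁻¹ • β, ?_⟩, rfl⟩, le_of_eq ?_⟩
    · simpa using (posSemidef_vecMulVec_self_star β).smul ht.le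
    · rw [smul_mulVec, mulVec_smul, vecMulVec_mulVec, smul_smul, op_smul_eq_smul, smul_smul]
      convert one_smul ℝ β
      field_simp
    · rw [Matrix.mul_smul, Matrix.smul_mul, mul_vecMulVec, vecMulVec_mul, vecMul_transpose,
        trace_smul, trace_vecMulVec, smul_mulVec, vecMulVec_mulVec]
      simp only [op_smul_eq_smul, smul_smul, dotProduct_smul, smul_eq_mul]
      field_simp

lemma dotProduct_transpose_mul_self_mulVec [Fintype m] (X : Matrix m ι ℝ)
    (β : ι → ℝ) : β ⬝ᵥ (Xᵀ * X) *ᵥ β = (X *ᵥ β) ⬝ᵥ (X *ᵥ β) := by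
  rw [← mulVec_mulVec, dotProduct_mulVec, vecMul_transpose]

end

-- At `v = 0` both sides vanish, the right one because `x / 0 = 0` in Lean.
lemma dotProduct_pinvScal_mulVec {k : ℕ} (r : Fin k → ℝ) (v : ℝ) :
    r ⬝ᵥ pinvScal k v *ᵥ r = r ⬝ᵥ r / v := by
  unfold pinvScal
  split_ifs with hv
  · simp [hv]
  · rw [smul_mulVec, one_mulVec, dotProduct_smul, smul_eq_mul, div_eq_inv_mul]

lemma isGLB_residual_penalty {k : ℕ} (r : Fin k → ℝ) {κ : ℝ} (hκ : 0 ≤ κ) :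
    IsGLB {s | ∃ v : ℝ, 0 ≤ v ∧ r ∈ Set.range (v • (1 : Matrix (Fin k) (Fin k) ℝ)).mulVec ∧
        s = r ⬝ᵥ pinvScal k v *ᵥ r + κ * v}
      (2 * √((r ⬝ᵥ r) * κ)) := by
  have h := isGLB_image_div_add_mul (by simpa using dotProduct_star_self_nonneg r) hκ
  refine h.of_forall_exists_le ?_ ?_
  · rintro _ ⟨v, hv, ⟨u, hu⟩, rfl⟩
    rw [dotProduct_pinvScal_mulVec]
    rcases hv.eq_or_lt with rfl | hv
    · obtain rfl : r = 0 := by simpa using hu.symm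
      simp
    · exact h.1 ⟨v, hv, rfl⟩
  · rintro _ ⟨t, ht, rfl⟩
    have ht : 0 < t := ht
    exact ⟨_, ⟨t, ht.le, ⟨t⁻¹ • r, by
      rw [smul_mulVec, one_mulVec, smul_smul, mul_inv_cancel₀ ht.ne', one_smul]⟩, rfl⟩,
      by rw [dotProduct_pinvScal_mulVec]⟩

theorem innerInf_eq {n d : ℕ} (y : Fin n → ℝ) (X : Matrix (Fin n) (Fin d) ℝ) (β : Fin d → ℝ) :
    innerInf y X β = 2 * √((y - X *ᵥ β) ⬝ᵥ (y - X *ᵥ β) * (n / (y ⬝ᵥ y))) +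
      2 * √((y ⬝ᵥ y)⁻¹ * ((X *ᵥ β) ⬝ᵥ (X *ᵥ β))) := by
  have hN : 0 ≤ y ⬝ᵥ y := by simpa using dotProduct_star_self_nonneg y
  have h := (isGLB_residual_penalty (y - X *ᵥ β) (κ := n / (y ⬝ᵥ y)) (by positivity)).add
    (isGLB_coef_penalty X β (inv_nonneg.2 hN))
  rw [← h.csInf_eq h.nonempty, innerInf]
  congr 1
  ext s
  constructor
  · rintro ⟨D, Dd, v, hD, hMP, hv, hr, hβ, rfl⟩
    refine ⟨_, ⟨v, hv, hr, rfl⟩, _, ⟨D, Dd, hD, hMP, hβ, rfl⟩, ?_⟩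
    rw [trace_add, trace_smul, trace_one, Fintype.card_fin, smul_eq_mul]
    ring
  · rintro ⟨_, ⟨v, hv, hr, rfl⟩, _, ⟨D, Dd, hD, hMP, hβ, rfl⟩, rfl⟩
    refine ⟨D, Dd, v, hD, hMP, hv, hr, hβ, ?_⟩
    rw [trace_add, trace_smul, trace_one, Fintype.card_fin, smul_eq_mul]
    ring

lemma two_mul_div_sqrt_mul_gCrit {n d : ℕ} (hn : 0 < n) (y : Fin n → ℝ)
    (X : Matrix (Fin n) (Fin d) ℝ) (β : Fin d → ℝ) :
    2 * n / √(y ⬝ᵥ y) * gCrit y X β = 2 * √((y - X *ᵥ β) ⬝ᵥ (y - X *ᵥ β) * (n / (y ⬝ᵥ y))) +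
      2 * √((y ⬝ᵥ y)⁻¹ * ((X *ᵥ β) ⬝ᵥ (X *ᵥ β))) := by
  have hN : 0 ≤ y ⬝ᵥ y := by simpa using dotProduct_star_self_nonneg y
  have ha : 0 ≤ (y - X *ᵥ β) ⬝ᵥ (y - X *ᵥ β) := by
    simpa using dotProduct_star_self_nonneg (y - X *ᵥ β)
  have hsn : √(n : ℝ) ≠ 0 := (Real.sqrt_pos.2 (by exact_mod_cast hn)).ne'
  rw [gCrit, smul_mulVec, dotProduct_smul, dotProduct_transpose_mul_self_mulVec, smul_eq_mul,
    Real.sqrt_div' _ (Nat.cast_nonneg n), Real.sqrt_mul (by positivity), Real.sqrt_mul ha,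
    Real.sqrt_div' _ hN, Real.sqrt_mul (by positivity)]
  simp only [one_div, Real.sqrt_inv]
  simp only [div_eq_mul_inv]
  generalize (√(y ⬝ᵥ y))⁻¹ = w
  field_simp
  rw [Real.sq_sqrt (Nat.cast_nonneg n)]
  ring

/-- The inner infimum equals `(2n/‖y‖₂)(√(MSPE(β)) + (1/√n)‖β‖_{Ĉ})`;
consequently minimizing it over `β` is equivalent to minimizing the criterion
with tuned `Ĉ`-weighted ℓ₂ regularization. -/
theorem stmt19 {n d : ℕ} (y : Fin n → ℝ) (hy0 : y ≠ 0)
    (X : Matrix (Fin n) (Fin d) ℝ) :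
    (∀ β : Fin d → ℝ,
      innerInf y X β = 2 * n / Real.sqrt (y ⬝ᵥ y) * gCrit y X β) ∧
    (∀ β : Fin d → ℝ,
      (∀ γ : Fin d → ℝ, innerInf y X β ≤ innerInf y X γ) ↔
        (∀ γ : Fin d → ℝ, gCrit y X β ≤ gCrit y X γ)) := by
  obtain ⟨i, -⟩ := Function.ne_iff.1 hy0
  have hn : 0 < n := i.pos
  have hN : 0 < y ⬝ᵥ y := by simpa using dotProduct_star_self_pos_iff.2 hy0
  have hinner : ∀ β, innerInf y X β = 2 * n / √(y ⬝ᵥ y) * gCrit y X β := fun β => by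
    rw [innerInf_eq, two_mul_div_sqrt_mul_gCrit hn]
  refine ⟨hinner, fun β => forall_congr' fun γ => ?_⟩
  rw [hinner, hinner, mul_le_mul_iff_right₀ (by positivity)]
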